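/- In ℂ[s,t,x,y] the following two identities hold (equation (9) of the paper): c₂d₃ + i·c₃d₂ = (1+i)·(−a₂a₃ + 4a₁a₅), and −i·(c₂d₃ − i·c₃d₂) = (1+i)·b₂b₃. -/

import Mathlib

noncomputable section
namespace Koike

open MvPolynomial

abbrev R4 : Type := MvPolynomial (Fin 4) ℂ

def s : R4 := X 0
def t : R4 := X 1
def x : R4 := X 2
def y : R4 := X 3

/-- the imaginary unit as a constant polynomial -/
def i : R4 := C Complex.I

def a1 : R4 := s + t + x + y
def a2 : R4 := s*t + t*x + x*y + y*s
def a3 : R4 := t*x*y + s*x*y + s*t*y + s*t*x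
def a4 : R4 := s*x + t*y
def a5 : R4 := s*t*x*y
def a6 : R4 := 1

def b1 : R4 := s - t + x - y
def b2 : R4 := s*t - t*x + x*y - y*s
def b3 : R4 := t*x*y - s*x*y + s*t*y - s*t*x
def b4 : R4 := s*x - t*y

def c1 : R4 := s - i*t - x + i*y
def c2 : R4 := s*t - i*(t*x) - x*y + i*(y*s)
def c3 : R4 := t*x*y - i*(s*x*y) - s*t*y + i*(s*t*x)

def d1 : R4 := s + i*t - x - i*y
def d2 : R4 := s*t + i*(t*x) - x*y - i*(y*s)
def d3 : R4 := t*x*y + i*(s*x*y) - s*t*y - i*(s*t*x)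

/-- the pullback `σ* : ℂ[s,t,x,y] → ℂ[s,t,x,y]`, determined by
`s ↦ y, t ↦ s, x ↦ t, y ↦ x`. -/
def sigmaStar : R4 →ₐ[ℂ] R4 := aeval ![y, s, t, x]

/-- the pullback `τ* : ℂ[s,t,x,y] → ℂ[s,t,x,y]`, determined by
`s ↦ x, t ↦ t, x ↦ s, y ↦ y`. -/
def tauStar : R4 →ₐ[ℂ] R4 := aeval ![x, t, s, y]

/-! Writing `c₂ = p - i q`, `d₂ = p + i q`, `c₃ = u - i v`, `d₃ = u + i v` with `p, q, u, v`
free of `i`, the relation `i² = -1` alone turns `c₂d₃ ± i c₃d₂` into `(1 ± i)` times an `i`-free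
polynomial; what remains are identities in `ℤ[s,t,x,y]`. -/

theorem mul_add_I_mul_conj_eq {R : Type*} [CommRing R] {I : R} (hI : I * I = -1) (p q u v : R) :
    (p - I*q) * (u + I*v) + I * ((u - I*v) * (p + I*q)) = (1 + I) * (p*(u + v) + q*(v - u)) := by
  linear_combination (q*u - q*v - p*v - I*q*v) * hI

theorem neg_I_mul_sub_I_mul_conj_eq {R : Type*} [CommRing R] {I : R} (hI : I * I = -1)
    (p q u v : R) :
    -I * ((p - I*q) * (u + I*v) - I * ((u - I*v) * (p + I*q))) =
      (1 + I) * (p*(v - u) - q*(u + v)) := by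
  linear_combination (p*u - (1 + I)*(p*v - q*u) + (1 + I - I*I)*q*v) * hI

theorem i_mul_i : i * i = -1 := by
  simp only [i, ← C_mul, Complex.I_mul_I, map_neg, map_one]

/-- `c₂d₃ + i c₃d₂ = (1+i)(−a₂a₃ + 4a₁a₅)` and `−i(c₂d₃ − i c₃d₂) = (1+i) b₂b₃`. -/
theorem stmt_14 :
    c2*d3 + i * (c3*d2) = (1 + i) * (-(a2*a3) + 4*a1*a5) ∧
    -i * (c2*d3 - i * (c3*d2)) = (1 + i) * (b2*b3) := by
  have hc2 : c2 = (s*t - x*y) - i*(t*x - y*s) := by rw [c2]; ring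
  have hd2 : d2 = (s*t - x*y) + i*(t*x - y*s) := by rw [d2]; ring
  have hc3 : c3 = (t*x*y - s*t*y) - i*(s*x*y - s*t*x) := by rw [c3]; ring
  have hd3 : d3 = (t*x*y - s*t*y) + i*(s*x*y - s*t*x) := by rw [d3]; ring
  rw [hc2, hd2, hc3, hd3, mul_add_I_mul_conj_eq i_mul_i, neg_I_mul_sub_I_mul_conj_eq i_mul_i]
  constructor <;> congr 1
  · rw [a1, a2, a3, a5]; ring
  · rw [b2, b3]; ring

end Koike
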